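/- arXiv:1910.11808 — 3 statements merged into one kernel-verified Lean document; each statement's English description precedes it below -/
import Mathlib

section
/- Let d(n) denote the number of nondecreasing Dyck words of semilength n. Then d(1) = 1, d(2) = 2, and for every n ≥ 1, d(n+2) = 3·d(n+1) − d(n). -/
/-- Height of the prefix of length `i` of the word `w`
(`true` = U-step, `false` = D-step): number of U's minus number of D's. -/
def prefixHeight (w : List Bool) (i : ℕ) : ℤ :=
  ((w.take i).count true : ℤ) - ((w.take i).count false : ℤ)

/-- `w` is a Dyck word: every prefix has nonnegative height and the whole word
has height 0 (equally many U's and D's). -/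
def IsDyckWord (w : List Bool) : Prop :=
  (∀ i, i ≤ w.length → 0 ≤ prefixHeight w i) ∧ prefixHeight w w.length = 0

/-- A valley at (0-based) position `i`: a D-step immediately followed by a U-step. -/
def IsValley (w : List Bool) (i : ℕ) : Prop :=
  w[i]? = some false ∧ w[i + 1]? = some true

/-- A nondecreasing Dyck word: a Dyck word whose valley altitudes, read left to
right, form a nondecreasing sequence.  The altitude of a valley at position `i`
is the height of the prefix ending at that D-step, i.e. of length `i + 1`. -/
def IsNondecDyck (w : List Bool) : Prop :=
  IsDyckWord w ∧ ∀ i j, IsValley w i → IsValley w j → i ≤ j →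
    prefixHeight w (i + 1) ≤ prefixHeight w (j + 1)

/-- The set of nondecreasing Dyck words of semilength `n`. -/
def nondecDyck (n : ℕ) : Set (List Bool) :=
  {w | w.length = 2 * n ∧ IsNondecDyck w}

/-- `d n` = number of nondecreasing Dyck words of semilength `n`. -/
noncomputable def numNondecDyck (n : ℕ) : ℕ := (nondecDyck n).ncard

/-!
Cut a nondecreasing Dyck word of semilength `n + 1` at its first return to the axis. If that
return is at the end, the word is an elevation `U v D` with `v` a nondecreasing Dyck word of
semilength `n`. Otherwise the valley at the first return has altitude `0`, the least possible,
so no valley precedes it: the first factor is a pyramid `Uᵃ Dᵃ`, and what follows is an arbitrary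
nondecreasing Dyck word of semilength `n + 1 - a ≥ 1`. Hence
`d(n + 1) = d(n) + ∑_{m=1}^{n} d(m)`, and subtracting two consecutive instances of this identity
gives `d(n + 2) = 3 d(n + 1) - d(n)`.
-/

def wordHeight (w : List Bool) : ℤ := (w.count true : ℤ) - (w.count false : ℤ)

@[simp]
lemma wordHeight_nil : wordHeight [] = 0 := rfl

@[simp]
lemma wordHeight_cons (b : Bool) (w : List Bool) :
    wordHeight (b :: w) = (if b then 1 else -1) + wordHeight w := by
  cases b <;> simp [wordHeight] <;> ring

@[simp]
lemma wordHeight_append (u v : List Bool) :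
    wordHeight (u ++ v) = wordHeight u + wordHeight v := by
  simp only [wordHeight, List.count_append]; push_cast; ring

@[simp]
lemma wordHeight_replicate (n : ℕ) (b : Bool) :
    wordHeight (List.replicate n b) = if b then (n : ℤ) else -n := by
  cases b <;> simp [wordHeight, List.count_replicate]

lemma prefixHeight_eq_wordHeight_take (w : List Bool) (i : ℕ) :
    prefixHeight w i = wordHeight (w.take i) := rfl

@[simp]
lemma prefixHeight_zero (w : List Bool) : prefixHeight w 0 = 0 := rfl

lemma prefixHeight_of_length_le {w : List Bool} {i : ℕ} (h : w.length ≤ i) :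
    prefixHeight w i = wordHeight w := by
  rw [prefixHeight_eq_wordHeight_take, List.take_of_length_le h]

lemma prefixHeight_cons_succ (b : Bool) (w : List Bool) (i : ℕ) :
    prefixHeight (b :: w) (i + 1) = (if b then 1 else -1) + prefixHeight w i := by
  simp [prefixHeight_eq_wordHeight_take]

lemma prefixHeight_append_of_le {u : List Bool} (v : List Bool) {i : ℕ} (h : i ≤ u.length) :
    prefixHeight (u ++ v) i = prefixHeight u i := by
  rw [prefixHeight_eq_wordHeight_take, prefixHeight_eq_wordHeight_take,
    List.take_append_of_le_length h]

lemma prefixHeight_append_length_add (u v : List Bool) (j : ℕ) :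
    prefixHeight (u ++ v) (u.length + j) = wordHeight u + prefixHeight v j := by
  rw [prefixHeight_eq_wordHeight_take, prefixHeight_eq_wordHeight_take,
    List.take_length_add_append, wordHeight_append]

lemma prefixHeight_succ_cases (w : List Bool) {i : ℕ} (h : i < w.length) :
    w[i]? = some true ∧ prefixHeight w (i + 1) = prefixHeight w i + 1 ∨
      w[i]? = some false ∧ prefixHeight w (i + 1) = prefixHeight w i - 1 := by
  rw [prefixHeight_eq_wordHeight_take, prefixHeight_eq_wordHeight_take, List.take_add_one,
    List.getElem?_eq_getElem h]
  cases w[i] <;> simp [sub_eq_add_neg]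

lemma IsDyckWord.wordHeight_eq_zero {w : List Bool} (hw : IsDyckWord w) : wordHeight w = 0 := by
  simpa only [prefixHeight_of_length_le le_rfl] using hw.2

lemma IsDyckWord.append {u v : List Bool} (hu : IsDyckWord u) (hv : IsDyckWord v) :
    IsDyckWord (u ++ v) := by
  refine ⟨fun i hi => ?_, ?_⟩
  · rcases le_or_gt i u.length with h | h
    · rw [prefixHeight_append_of_le v h]
      exact hu.1 i h
    · obtain ⟨j, rfl⟩ := Nat.exists_eq_add_of_le h.le
      rw [prefixHeight_append_length_add, hu.wordHeight_eq_zero, zero_add]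
      exact hv.1 j (by simp at hi; omega)
  · rw [prefixHeight_of_length_le le_rfl, wordHeight_append, hu.wordHeight_eq_zero,
      hv.wordHeight_eq_zero, add_zero]

lemma IsDyckWord.of_append {u v : List Bool} (hu : wordHeight u = 0)
    (h : IsDyckWord (u ++ v)) : IsDyckWord v := by
  have hshift : ∀ j, prefixHeight v j = prefixHeight (u ++ v) (u.length + j) := fun j => by
    rw [prefixHeight_append_length_add, hu, zero_add]
  refine ⟨fun j hj => ?_, ?_⟩
  · rw [hshift]
    exact h.1 _ (by simp; omega)
  · rw [hshift]
    simpa using h.2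

lemma IsDyckWord.head {w : List Bool} (hw : IsDyckWord w) (hne : w ≠ []) :
    w[0]? = some true := by
  rcases prefixHeight_succ_cases w (List.length_pos_iff.2 hne) with h | ⟨_, h⟩
  · exact h.1
  · have := hw.1 1 (List.length_pos_iff.2 hne)
    simp only [zero_add, prefixHeight_zero] at h
    omega

lemma IsValley.succ_lt_length {w : List Bool} {i : ℕ} (h : IsValley w i) : i + 1 < w.length :=
  (List.getElem?_eq_some_iff.1 h.2).1

@[simp]
lemma isValley_cons_succ (b : Bool) (w : List Bool) (i : ℕ) :
    IsValley (b :: w) (i + 1) ↔ IsValley w i := Iff.rfl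

lemma not_isValley_true_cons_zero (w : List Bool) : ¬ IsValley (true :: w) 0 := by
  simp [IsValley]

lemma isValley_append_of_succ_lt {u : List Bool} (v : List Bool) {i : ℕ}
    (h : i + 1 < u.length) : IsValley (u ++ v) i ↔ IsValley u i := by
  simp only [IsValley, List.getElem?_append_left h,
    List.getElem?_append_left (Nat.lt_of_succ_lt h)]

lemma isValley_append_length_add (u v : List Bool) (j : ℕ) :
    IsValley (u ++ v) (u.length + j) ↔ IsValley v j := by
  simp only [IsValley, Nat.add_assoc,
    List.getElem?_append_right (Nat.le_add_right _ _), Nat.add_sub_cancel_left]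

lemma isValley_append_false {w : List Bool} {i : ℕ} :
    IsValley (w ++ [false]) i ↔ IsValley w i := by
  refine ⟨fun h => ?_, fun h => (isValley_append_of_succ_lt _ h.succ_lt_length).2 h⟩
  have hlt : i + 1 < w.length := by
    by_contra! hge
    have := List.mem_of_getElem? ((List.getElem?_append_right hge).symm.trans h.2)
    simp at this
  exact (isValley_append_of_succ_lt _ hlt).1 h

lemma IsValley.append_cases {u v : List Bool} {i : ℕ} (h : IsValley (u ++ v) i) :
    (i + 1 < u.length ∧ IsValley u i) ∨ i + 1 = u.length ∨
      ∃ j, i = u.length + j ∧ IsValley v j := by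
  rcases lt_trichotomy (i + 1) u.length with hlt | heq | hgt
  · exact Or.inl ⟨hlt, (isValley_append_of_succ_lt v hlt).1 h⟩
  · exact Or.inr (Or.inl heq)
  · obtain ⟨j, rfl⟩ := Nat.exists_eq_add_of_le (Nat.le_of_lt_succ hgt)
    exact Or.inr (Or.inr ⟨j, rfl, (isValley_append_length_add u v j).1 h⟩)

lemma not_isValley_replicate_append_replicate (p q i : ℕ) :
    ¬ IsValley (List.replicate p true ++ List.replicate q false) i := by
  induction p generalizing i with
  | zero =>
    intro h
    simpa using List.mem_of_getElem? h.2
  | succ p ih =>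
    cases i with
    | zero => simp [IsValley, List.replicate_succ]
    | succ i => simpa [List.replicate_succ] using ih i

lemma exists_eq_replicate_append_replicate_of_forall_not_isValley :
    ∀ {w : List Bool}, (∀ i, ¬ IsValley w i) →
      ∃ p q, w = List.replicate p true ++ List.replicate q false
  | [], _ => ⟨0, 0, rfl⟩
  | b :: w, h => by
    obtain ⟨p, q, rfl⟩ :=
      exists_eq_replicate_append_replicate_of_forall_not_isValley fun i => h (i + 1)
    cases b
    · cases p with
      | zero => exact ⟨0, q + 1, rfl⟩
      | succ p => exact absurd ⟨rfl, rfl⟩ (h 0)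
    · exact ⟨p + 1, q, rfl⟩

-- `IsNondecDyck w` unfolds to `IsDyckWord w ∧ NondecValleys w`.
def NondecValleys (w : List Bool) : Prop :=
  ∀ i j, IsValley w i → IsValley w j → i ≤ j → prefixHeight w (i + 1) ≤ prefixHeight w (j + 1)

lemma NondecValleys.of_append {u v : List Bool} (h : NondecValleys (u ++ v)) :
    NondecValleys v := by
  intro i j hi hj hij
  have := h (u.length + i) (u.length + j) ((isValley_append_length_add u v i).2 hi)
    ((isValley_append_length_add u v j).2 hj) (by omega)
  simpa only [Nat.add_assoc, prefixHeight_append_length_add, add_le_add_iff_left] using this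

lemma NondecValleys.append_of_forall_not_isValley {u v : List Bool} (hu : ∀ i, ¬ IsValley u i)
    (hv : IsDyckWord v) (h : NondecValleys v) : NondecValleys (u ++ v) := by
  intro i j hi hj hij
  rcases hi.append_cases with ⟨-, hi'⟩ | hi' | ⟨i', rfl, hi'⟩
  · exact absurd hi' (hu i)
  · -- the junction sits at the height of `u`, the least height reachable after it
    obtain ⟨k, hk⟩ := Nat.exists_eq_add_of_le (show u.length ≤ j + 1 by omega)
    have hkv : k ≤ v.length := by have := hj.succ_lt_length; simp at this; omega
    rw [hi', hk, prefixHeight_append_of_le v le_rfl, prefixHeight_of_length_le le_rfl,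
      prefixHeight_append_length_add, le_add_iff_nonneg_right]
    exact hv.1 k hkv
  · rcases hj.append_cases with ⟨hj', -⟩ | hj' | ⟨j', rfl, hj'⟩
    · omega
    · omega
    · simpa only [Nat.add_assoc, prefixHeight_append_length_add, add_le_add_iff_left] using
        h i' j' hi' hj' (by omega)

def IsFirstReturn (w : List Bool) (r : ℕ) : Prop :=
  0 < r ∧ prefixHeight w r = 0 ∧ ∀ i, 0 < i → i < r → 0 < prefixHeight w i

lemma IsFirstReturn.unique {w : List Bool} {r s : ℕ} (hr : IsFirstReturn w r)
    (hs : IsFirstReturn w s) : r = s := by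
  rcases lt_trichotomy r s with h | h | h
  · exact absurd hr.2.1 (hs.2.2 r hr.1 h).ne'
  · exact h
  · exact absurd hs.2.1 (hr.2.2 s hs.1 h).ne'

lemma IsDyckWord.exists_isFirstReturn {w : List Bool} (hw : IsDyckWord w) (hne : w ≠ []) :
    ∃ r ≤ w.length, IsFirstReturn w r := by
  classical
  have hex : ∃ r, 0 < r ∧ prefixHeight w r = 0 := ⟨w.length, List.length_pos_iff.2 hne, hw.2⟩
  refine ⟨Nat.find hex, Nat.find_min' hex ⟨List.length_pos_iff.2 hne, hw.2⟩,
    (Nat.find_spec hex).1, (Nat.find_spec hex).2, fun i hi hlt => ?_⟩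
  have hne0 : prefixHeight w i ≠ 0 := fun h0 => Nat.find_min hex hlt ⟨hi, h0⟩
  have := hw.1 i (by have := Nat.find_min' hex ⟨List.length_pos_iff.2 hne, hw.2⟩; omega)
  omega

lemma IsFirstReturn.isDyckWord {w : List Bool} (h : IsFirstReturn w w.length) :
    IsDyckWord w := by
  refine ⟨fun i hi => ?_, h.2.1⟩
  rcases Nat.eq_zero_or_pos i with rfl | hi0
  · exact le_rfl
  rcases hi.lt_or_eq with hlt | rfl
  · exact (h.2.2 i hi0 hlt).le
  · exact h.2.1.ge

def elevate (v : List Bool) : List Bool := true :: (v ++ [false])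

@[simp]
lemma length_elevate (v : List Bool) : (elevate v).length = v.length + 2 := by
  simp [elevate]

@[simp]
lemma wordHeight_elevate (v : List Bool) : wordHeight (elevate v) = wordHeight v := by
  simp [elevate]

lemma prefixHeight_elevate_succ (v : List Bool) {i : ℕ} (h : i ≤ v.length) :
    prefixHeight (elevate v) (i + 1) = 1 + prefixHeight v i := by
  rw [elevate, prefixHeight_cons_succ, prefixHeight_append_of_le _ h, if_pos rfl]

lemma nondecValleys_elevate_iff {v : List Bool} :
    NondecValleys (elevate v) ↔ NondecValleys v := by
  have halt : ∀ {i}, IsValley v i →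
      prefixHeight (elevate v) (i + 1 + 1) = 1 + prefixHeight v (i + 1) := fun hi =>
    prefixHeight_elevate_succ v hi.succ_lt_length.le
  constructor
  · intro h i j hi hj hij
    have := h (i + 1) (j + 1) (isValley_append_false.2 hi) (isValley_append_false.2 hj)
      (by omega)
    rw [halt hi, halt hj] at this
    omega
  · intro h i j hi hj hij
    obtain ⟨i, rfl⟩ : ∃ i', i = i' + 1 := Nat.exists_eq_succ_of_ne_zero fun h0 =>
      not_isValley_true_cons_zero _ (h0 ▸ hi)
    obtain ⟨j, rfl⟩ : ∃ j', j = j' + 1 := Nat.exists_eq_succ_of_ne_zero fun h0 =>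
      not_isValley_true_cons_zero _ (h0 ▸ hj)
    have hi' := isValley_append_false.1 hi
    have hj' := isValley_append_false.1 hj
    rw [halt hi', halt hj']
    linarith [h i j hi' hj' (by omega)]

lemma isFirstReturn_length_iff {w : List Bool} :
    IsFirstReturn w w.length ↔ ∃ v, IsDyckWord v ∧ elevate v = w := by
  constructor
  · intro h
    rcases List.eq_nil_or_concat' w with rfl | ⟨w', b, rfl⟩
    · exact absurd h.1 (lt_irrefl 0)
    rcases w' with _ | ⟨b', v⟩
    · have := h.2.1
      cases b <;> simp [prefixHeight_cons_succ] at this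
    obtain rfl : b' = true := by simpa using h.isDyckWord.head (by simp)
    rw [List.cons_append] at h ⊢
    have hpos : ∀ i ≤ v.length, 0 < 1 + prefixHeight v i := fun i hi => by
      have := h.2.2 (i + 1) (by omega) (by simp; omega)
      rwa [prefixHeight_cons_succ, prefixHeight_append_of_le _ hi, if_pos rfl] at this
    have htotal : 1 + wordHeight v + (if b then 1 else -1) = 0 := by
      simpa [prefixHeight_of_length_le, add_assoc] using h.2.1
    have hv := hpos v.length le_rfl
    rw [prefixHeight_of_length_le le_rfl] at hv
    cases b
    · refine ⟨v, ⟨fun i hi => ?_, ?_⟩, rfl⟩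
      · linarith [hpos i hi]
      · simp at htotal
        rw [prefixHeight_of_length_le le_rfl]
        omega
    · simp at htotal
      omega
  · rintro ⟨v, hv, rfl⟩
    refine ⟨by simp, ?_, fun i hi hlt => ?_⟩
    · rw [prefixHeight_of_length_le le_rfl, wordHeight_elevate, hv.wordHeight_eq_zero]
    · obtain ⟨k, rfl⟩ := Nat.exists_eq_succ_of_ne_zero hi.ne'
      rw [length_elevate] at hlt
      rw [prefixHeight_elevate_succ v (by omega)]
      linarith [hv.1 k (by omega)]

def pyramid (a : ℕ) : List Bool := List.replicate a true ++ List.replicate a false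

@[simp]
lemma length_pyramid (a : ℕ) : (pyramid a).length = 2 * a := by
  simp [pyramid]; ring

@[simp]
lemma wordHeight_pyramid (a : ℕ) : wordHeight (pyramid a) = 0 := by
  simp [pyramid]

lemma prefixHeight_pyramid (a i : ℕ) :
    prefixHeight (pyramid a) i = ((min i a : ℕ) : ℤ) - ((min (i - a) a : ℕ) : ℤ) := by
  rw [prefixHeight_eq_wordHeight_take, pyramid, List.take_append, wordHeight_append,
    List.take_replicate, List.take_replicate, List.length_replicate]
  simp only [wordHeight_replicate, if_true, Bool.false_eq_true, if_false]
  ring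

lemma isDyckWord_pyramid (a : ℕ) : IsDyckWord (pyramid a) :=
  ⟨fun i _ => by rw [prefixHeight_pyramid]; omega,
    by rw [prefixHeight_of_length_le le_rfl, wordHeight_pyramid]⟩

lemma isFirstReturn_pyramid_append {a : ℕ} (ha : 0 < a) (u : List Bool) :
    IsFirstReturn (pyramid a ++ u) (2 * a) := by
  refine ⟨by omega, ?_, fun i hi hlt => ?_⟩
  · rw [prefixHeight_append_of_le u (length_pyramid a).ge,
      prefixHeight_of_length_le (length_pyramid a).le, wordHeight_pyramid]
  · rw [prefixHeight_append_of_le u (by simp; omega), prefixHeight_pyramid]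
    omega

lemma isNondecDyck_pyramid_append_iff {a : ℕ} {u : List Bool} :
    IsNondecDyck (pyramid a ++ u) ↔ IsNondecDyck u :=
  ⟨fun h => ⟨h.1.of_append (wordHeight_pyramid a), NondecValleys.of_append h.2⟩,
    fun h => ⟨(isDyckWord_pyramid a).append h.1,
      NondecValleys.append_of_forall_not_isValley
        (not_isValley_replicate_append_replicate a a) h.1 h.2⟩⟩

lemma IsNondecDyck.exists_take_eq_pyramid {w : List Bool} {r : ℕ} (hw : IsNondecDyck w)
    (hr : IsFirstReturn w r) (hlt : r < w.length) : ∃ a, w.take r = pyramid a := by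
  obtain ⟨r, rfl⟩ := Nat.exists_eq_succ_of_ne_zero hr.1.ne'
  have hdown : w[r]? = some false := by
    rcases prefixHeight_succ_cases w (show r < w.length by omega) with ⟨-, h⟩ | ⟨h, -⟩
    · linarith [hr.2.1, hw.1.1 r (by omega)]
    · exact h
  have hup : w[r + 1]? = some true := by
    rcases prefixHeight_succ_cases w hlt with ⟨h, -⟩ | ⟨-, h⟩
    · exact h
    · linarith [hr.2.1, hw.1.1 (r + 1 + 1) hlt]
  -- a valley of altitude `0` at the first return leaves no room for valleys before it
  have hno : ∀ i, ¬ IsValley (w.take (r + 1)) i := by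
    intro i hi
    have hir : i + 1 < r + 1 := by
      have := hi.succ_lt_length
      simp at this
      omega
    have hwi : IsValley w i := by
      rw [← List.take_append_drop (r + 1) w]
      exact (isValley_append_of_succ_lt _ (by simp; omega)).2 hi
    have := hw.2 i r hwi ⟨hdown, hup⟩ (by omega)
    linarith [hr.2.1, hr.2.2 (i + 1) (by omega) hir]
  obtain ⟨p, q, hpq⟩ := exists_eq_replicate_append_replicate_of_forall_not_isValley hno
  have hheight : wordHeight (w.take (r + 1)) = 0 := hr.2.1
  rw [hpq] at hheight
  simp at hheight
  obtain rfl : p = q := by omega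
  exact ⟨p, hpq⟩

lemma mem_nondecDyck_succ_iff {n : ℕ} {w : List Bool} :
    w ∈ nondecDyck (n + 1) ↔
      (∃ v ∈ nondecDyck n, elevate v = w) ∨
        ∃ m ∈ Finset.Icc 1 n, ∃ u ∈ nondecDyck m, pyramid (n + 1 - m) ++ u = w := by
  constructor
  · rintro ⟨hlen, hw⟩
    obtain ⟨r, hrle, hr⟩ := hw.1.exists_isFirstReturn (by rintro rfl; simp at hlen)
    rcases hrle.lt_or_eq with hlt | rfl
    · obtain ⟨a, ha⟩ := hw.exists_take_eq_pyramid hr hlt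
      have hra : r = 2 * a := by
        have := congrArg List.length ha
        simp at this
        omega
      have hr0 := hr.1
      have hsplit : pyramid a ++ w.drop r = w := ha ▸ List.take_append_drop r w
      refine Or.inr ⟨n + 1 - a, by simp; omega, w.drop r, ⟨by simp; omega, ?_⟩, ?_⟩
      · exact isNondecDyck_pyramid_append_iff.1 (hsplit ▸ hw)
      · rwa [show n + 1 - (n + 1 - a) = a by omega]
    · obtain ⟨v, hv, rfl⟩ := isFirstReturn_length_iff.1 hr
      exact Or.inl ⟨v, ⟨by simp at hlen; omega, hv, nondecValleys_elevate_iff.1 hw.2⟩, rfl⟩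
  · rintro (⟨v, ⟨hlen, hv⟩, rfl⟩ | ⟨m, hm, u, ⟨hlen, hu⟩, rfl⟩)
    · exact ⟨by simp; omega, (isFirstReturn_length_iff.2 ⟨v, hv.1, rfl⟩).isDyckWord,
        nondecValleys_elevate_iff.2 hv.2⟩
    · simp only [Finset.mem_Icc] at hm
      exact ⟨by simp; omega, isNondecDyck_pyramid_append_iff.2 hu⟩

lemma elevate_injective : Function.Injective elevate := fun _ _ h =>
  List.append_cancel_right (List.cons_injective h)

lemma eq_of_pyramid_append_eq {a b : ℕ} {u v : List Bool} (ha : 0 < a) (hb : 0 < b)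
    (h : pyramid a ++ u = pyramid b ++ v) : a = b := by
  have := (isFirstReturn_pyramid_append ha u).unique (h ▸ isFirstReturn_pyramid_append hb v)
  omega

lemma elevate_ne_pyramid_append {v u : List Bool} {a : ℕ} (hv : IsDyckWord v) (ha : 0 < a)
    (hlt : 2 * a < (elevate v).length) : elevate v ≠ pyramid a ++ u := fun h => by
  have := (isFirstReturn_length_iff.2 ⟨v, hv, rfl⟩).unique
    (h ▸ isFirstReturn_pyramid_append ha u)
  omega

lemma nondecDyck_finite (n : ℕ) : (nondecDyck n).Finite :=
  (List.finite_length_eq Bool (2 * n)).subset fun _ hw => hw.1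

lemma nondecDyck_zero : nondecDyck 0 = {[]} := by
  ext w
  refine ⟨fun hw => List.length_eq_zero_iff.1 hw.1, ?_⟩
  rintro rfl
  exact ⟨rfl, ⟨fun i _ => by simp [prefixHeight], rfl⟩,
    fun i _ hi => absurd hi.succ_lt_length (by simp)⟩

lemma numNondecDyck_zero : numNondecDyck 0 = 1 := by
  rw [numNondecDyck, nondecDyck_zero, Set.ncard_singleton]

lemma numNondecDyck_succ (n : ℕ) :
    numNondecDyck (n + 1) = numNondecDyck n + ∑ m ∈ Finset.Icc 1 n, numNondecDyck m := by
  have hsplit : nondecDyck (n + 1) = elevate '' nondecDyck n ∪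
      ⋃ m ∈ (Finset.Icc 1 n : Set ℕ), (pyramid (n + 1 - m) ++ ·) '' nondecDyck m := by
    ext w
    simpa only [Set.mem_union, Set.mem_image, Set.mem_iUnion, Finset.mem_coe, exists_prop]
      using mem_nondecDyck_succ_iff
  have hdisj : Disjoint (elevate '' nondecDyck n)
      (⋃ m ∈ (Finset.Icc 1 n : Set ℕ), (pyramid (n + 1 - m) ++ ·) '' nondecDyck m) := by
    refine Set.disjoint_iUnion₂_right.2 fun m hm => Set.disjoint_left.2 ?_
    simp only [Finset.coe_Icc, Set.mem_Icc] at hm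
    rintro _ ⟨v, hv, rfl⟩ ⟨u, -, hu⟩
    exact elevate_ne_pyramid_append hv.2.1 (by omega) (by simp [hv.1]; omega) hu.symm
  have hpair : (Finset.Icc 1 n : Set ℕ).PairwiseDisjoint
      fun m => (pyramid (n + 1 - m) ++ ·) '' nondecDyck m := by
    intro m hm m' hm' hne
    simp only [Finset.coe_Icc, Set.mem_Icc] at hm hm'
    refine Set.disjoint_left.2 ?_
    rintro _ ⟨u, -, rfl⟩ ⟨u', -, h⟩
    exact hne (by have := eq_of_pyramid_append_eq (by omega) (by omega) h; omega)
  rw [numNondecDyck, hsplit, Set.ncard_union_eq hdisj ((nondecDyck_finite n).image _)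
      ((Finset.finite_toSet _).biUnion fun m _ => (nondecDyck_finite m).image _),
    Set.ncard_image_of_injective _ elevate_injective,
    (Finset.finite_toSet _).ncard_biUnion (fun m _ => (nondecDyck_finite m).image _) hpair,
    finsum_mem_coe_finset]
  congr 1
  refine Finset.sum_congr rfl fun m _ => ?_
  exact Set.ncard_image_of_injective _ (List.append_right_injective _)

/-- `d(1) = 1`, `d(2) = 2`, and for every `n ≥ 1`,
`d(n+2) = 3·d(n+1) − d(n)`. -/
theorem nondecDyck_recurrence :
    numNondecDyck 1 = 1 ∧ numNondecDyck 2 = 2 ∧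
    ∀ n : ℕ, 1 ≤ n →
      (numNondecDyck (n + 2) : ℤ) =
        3 * numNondecDyck (n + 1) - numNondecDyck n := by
  have h1 : numNondecDyck 1 = 1 := by simpa [numNondecDyck_zero] using numNondecDyck_succ 0
  refine ⟨h1, by simpa [h1] using numNondecDyck_succ 1, fun n _ => ?_⟩
  have hnext : numNondecDyck (n + 2) =
      numNondecDyck (n + 1) + ∑ m ∈ Finset.Icc 1 (n + 1), numNondecDyck m :=
    numNondecDyck_succ (n + 1)
  rw [Finset.sum_Icc_succ_top (by omega)] at hnext
  have := numNondecDyck_succ n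
  omega
end

section
/- In the ring of formal power series over ℤ, the generating function D(X) = Σ_{n≥0} d(n) X^n of the numbers d(n) of nondecreasing Dyck words of semilength n (with d(0) = 1, counting the empty word) satisfies (1 − 3X + X²)·D(X) = 1 − 2X, i.e. D(X) = (1 − 2X)/(1 − 3X + X²). -/
/-!
A nonempty Dyck word is a product of blocks `U^a₁ D^b₁ ⋯ U^a_k D^b_k` with all `aᵢ, bᵢ ≥ 1`.
Its valleys are the block boundaries, the one after block `t` having altitude
`Σ_{i ≤ t} (aᵢ - bᵢ)`, so the word is nondecreasing exactly when `bᵢ ≤ aᵢ` for every block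
but the last. The last block is then determined by its `a_k` and the earlier blocks, so
`d(n+1) = Σ_{j ≤ n} c(j)`, where `c(m)` counts block lists with `1 ≤ bᵢ ≤ aᵢ` and
`Σ aᵢ = m`. Splitting such a list according to whether its first block has `a₁ > b₁`
(lower `a₁` by one) or `a₁ = b₁` (delete the block) gives `c(m+2) = c(m+1) + d(m+2)`.
Hence `d(n+2) = 3 d(n+1) - d(n)`, which is the identity of power series.
-/

open List

lemma List.IsSuffix.getLast?_eq_some {α : Type*} {l₁ l₂ : List α} (h : l₁ <:+ l₂) {b : α}
    (hb : l₁.getLast? = some b) : l₂.getLast? = some b := by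
  obtain ⟨s, rfl⟩ := h
  simp [getLast?_append, hb]

lemma Set.ncard_biUnion_finset_image {ι α β : Type*} (s : Finset ι) (f : ι → α → β) (t : ι → Set α)
    (ht : ∀ i ∈ s, (t i).Finite) (hf : ∀ i ∈ s, Set.InjOn (f i) (t i))
    (hst : (s : Set ι).PairwiseDisjoint fun i => f i '' t i) :
    (⋃ i ∈ s, f i '' t i).ncard = ∑ i ∈ s, (t i).ncard := by
  rw [← Finset.set_biUnion_coe, Set.Finite.ncard_biUnion s.finite_toSet
    (fun i hi => (ht i hi).image _) hst, finsum_mem_coe_finset]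
  exact Finset.sum_congr rfl fun i hi => (hf i hi).ncard_image

namespace NondecDyck

variable {M : List (ℕ × ℕ)} {w : List Bool} {i t u : ℕ}

def netHeight (w : List Bool) : ℤ := w.count true - w.count false

lemma prefixHeight_eq_netHeight_take (w : List Bool) (i : ℕ) :
    prefixHeight w i = netHeight (w.take i) := rfl

@[simp] lemma prefixHeight_zero (w : List Bool) : prefixHeight w 0 = 0 := by
  simp [prefixHeight]

lemma netHeight_append (u v : List Bool) : netHeight (u ++ v) = netHeight u + netHeight v := by
  simp only [netHeight, count_append]
  push_cast
  ring

lemma prefixHeight_append (u v : List Bool) (i : ℕ) :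
    prefixHeight (u ++ v) i = prefixHeight u i + prefixHeight v (i - u.length) := by
  simp only [prefixHeight_eq_netHeight_take, take_append, netHeight_append]

lemma prefixHeight_of_length_le (h : w.length ≤ i) : prefixHeight w i = netHeight w := by
  rw [prefixHeight_eq_netHeight_take, take_of_length_le h]

def block (p : ℕ × ℕ) : List Bool := replicate p.1 true ++ replicate p.2 false

@[simp] lemma length_block (p : ℕ × ℕ) : (block p).length = p.1 + p.2 := by simp [block]

lemma netHeight_block (p : ℕ × ℕ) : netHeight (block p) = p.1 - p.2 := by
  simp [netHeight, block, count_replicate]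

lemma prefixHeight_block (p : ℕ × ℕ) (i : ℕ) :
    prefixHeight (block p) i = min (i : ℤ) p.1 - min ((i - p.1 : ℕ) : ℤ) p.2 := by
  simp [block, prefixHeight, take_append, take_replicate, count_replicate]

lemma getElem?_block (p : ℕ × ℕ) (i : ℕ) :
    (block p)[i]? = if i < p.1 then some true else if i < p.1 + p.2 then some false else none := by
  simp only [block, getElem?_append, getElem?_replicate, length_replicate]
  split_ifs <;> first | rfl | omega

def ofRuns (M : List (ℕ × ℕ)) : List Bool := M.flatMap block

@[simp] lemma ofRuns_nil : ofRuns [] = [] := rfl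

@[simp] lemma ofRuns_cons (p : ℕ × ℕ) (M : List (ℕ × ℕ)) :
    ofRuns (p :: M) = block p ++ ofRuns M := flatMap_cons

lemma ofRuns_append (M N : List (ℕ × ℕ)) : ofRuns (M ++ N) = ofRuns M ++ ofRuns N :=
  flatMap_append

lemma count_true_ofRuns (M : List (ℕ × ℕ)) : (ofRuns M).count true = (M.map Prod.fst).sum := by
  induction M with
  | nil => rfl
  | cons p M ih => simp [block, count_replicate, ih]

lemma count_false_ofRuns (M : List (ℕ × ℕ)) :
    (ofRuns M).count false = (M.map Prod.snd).sum := by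
  induction M with
  | nil => rfl
  | cons p M ih => simp [block, count_replicate, ih]

lemma length_ofRuns (M : List (ℕ × ℕ)) :
    (ofRuns M).length = (M.map Prod.fst).sum + (M.map Prod.snd).sum := by
  rw [← count_true_add_count_false, count_true_ofRuns, count_false_ofRuns]

lemma ofRuns_eq_take_append_drop (M : List (ℕ × ℕ)) (t : ℕ) :
    ofRuns M = ofRuns (M.take t) ++ ofRuns (M.drop t) := by
  rw [← ofRuns_append, take_append_drop]

def boundary (M : List (ℕ × ℕ)) (t : ℕ) : ℕ := (ofRuns (M.take t)).length

def level (M : List (ℕ × ℕ)) (t : ℕ) : ℤ := netHeight (ofRuns (M.take t))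

@[simp] lemma boundary_zero (M : List (ℕ × ℕ)) : boundary M 0 = 0 := rfl

@[simp] lemma level_zero (M : List (ℕ × ℕ)) : level M 0 = 0 := rfl

lemma boundary_cons_succ (p : ℕ × ℕ) (M : List (ℕ × ℕ)) (t : ℕ) :
    boundary (p :: M) (t + 1) = p.1 + p.2 + boundary M t := by
  simp [boundary]

lemma level_cons_succ (p : ℕ × ℕ) (M : List (ℕ × ℕ)) (t : ℕ) :
    level (p :: M) (t + 1) = (p.1 - p.2) + level M t := by
  simp [level, netHeight_append, netHeight_block]

lemma boundary_succ (h : t < M.length) :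
    boundary M (t + 1) = boundary M t + (M[t].1 + M[t].2) := by
  rw [boundary, boundary, take_add_one, getElem?_eq_getElem h, Option.toList_some, ofRuns_append,
    length_append, ofRuns_cons, ofRuns_nil, append_nil, length_block]

lemma level_succ (h : t < M.length) : level M (t + 1) = level M t + (M[t].1 - M[t].2) := by
  rw [level, level, take_add_one, getElem?_eq_getElem h, Option.toList_some, ofRuns_append,
    netHeight_append, ofRuns_cons, ofRuns_nil, append_nil, netHeight_block]

lemma level_length (M : List (ℕ × ℕ)) :
    level M M.length = ((M.map Prod.fst).sum : ℤ) - (M.map Prod.snd).sum := by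
  rw [level, take_length, netHeight, count_true_ofRuns, count_false_ofRuns]

lemma boundary_le_length (M : List (ℕ × ℕ)) (t : ℕ) : boundary M t ≤ (ofRuns M).length := by
  rw [boundary, ofRuns_eq_take_append_drop M t, length_append]
  omega

lemma prefixHeight_boundary (M : List (ℕ × ℕ)) (t : ℕ) :
    prefixHeight (ofRuns M) (boundary M t) = level M t := by
  rw [prefixHeight_eq_netHeight_take, ofRuns_eq_take_append_drop M t, boundary, take_left, level]

lemma boundary_lt_boundary (hM : ∀ p ∈ M, 0 < p.1 ∧ 0 < p.2) (htu : t < u)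
    (hu : u ≤ M.length) : boundary M t < boundary M u := by
  obtain ⟨k, rfl⟩ : ∃ k, u = t + (k + 1) := ⟨u - t - 1, by omega⟩
  have ht : t < M.length := by omega
  have hpos := hM M[t] (getElem_mem ht)
  simp only [boundary, take_add, drop_eq_getElem_cons ht, take_succ_cons, ofRuns_append,
    ofRuns_cons, length_append, length_block]
  omega

lemma level_mono (hd : ∀ p ∈ M.dropLast, p.2 ≤ p.1) (htu : t ≤ u) (hu : u < M.length) :
    level M t ≤ level M u := by
  induction u, htu using Nat.le_induction with
  | base => exact le_rfl
  | succ u _ ih =>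
    have hmem : M[u] ∈ M.dropLast := by
      rw [← getElem_dropLast (by rw [length_dropLast]; omega)]
      exact getElem_mem _
    have := hd _ hmem
    rw [level_succ (by omega)]
    linarith [ih (by omega)]

lemma getElem?_ofRuns_boundary_add (ht : t < M.length) {j : ℕ} (hj : j < M[t].1 + M[t].2) :
    (ofRuns M)[boundary M t + j]? = (block M[t])[j]? := by
  rw [ofRuns_eq_take_append_drop M t, drop_eq_getElem_cons ht, ofRuns_cons, boundary,
    getElem?_append_right (by omega), Nat.add_sub_cancel_left,
    getElem?_append_left (by simpa using hj)]

lemma isValley_boundary (hM : ∀ p ∈ M, 0 < p.1 ∧ 0 < p.2) (ht : t + 1 < M.length) :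
    IsValley (ofRuns M) (boundary M (t + 1) - 1) := by
  have hp := hM M[t] (getElem_mem (by omega))
  have hq := hM M[t + 1] (getElem_mem ht)
  rw [boundary_succ (by omega)]
  constructor
  · rw [Nat.add_sub_assoc (by omega), getElem?_ofRuns_boundary_add (by omega) (by omega),
      getElem?_block, if_neg (by omega), if_pos (by omega)]
  · rw [show boundary M t + (M[t].1 + M[t].2) - 1 + 1 = boundary M (t + 1) + 0 by
      rw [boundary_succ (by omega)]; omega, getElem?_ofRuns_boundary_add ht (by omega),
      getElem?_block, if_pos hq.1]

lemma exists_boundary_of_isValley (hM : ∀ p ∈ M, 0 < p.1 ∧ 0 < p.2)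
    (hv : IsValley (ofRuns M) i) : ∃ t, 0 < t ∧ t < M.length ∧ i + 1 = boundary M t := by
  induction M generalizing i with
  | nil => simp [IsValley] at hv
  | cons p M ih =>
    obtain ⟨hp1, hp2⟩ := hM p mem_cons_self
    obtain ⟨hfalse, htrue⟩ := hv
    simp only [ofRuns_cons, getElem?_append, length_block, getElem?_block] at hfalse htrue
    rcases lt_trichotomy (i + 1) (p.1 + p.2) with hi | hi | hi
    · have hp : p.1 ≤ i := by
        by_contra hlt
        simp [hlt, show i < p.1 + p.2 by omega] at hfalse
      simp [hi, show ¬ i + 1 < p.1 by omega] at htrue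
    · refine ⟨1, one_pos, ?_, by rw [boundary_cons_succ, boundary_zero, hi, add_zero]⟩
      rw [if_neg (by omega), hi, Nat.sub_self] at htrue
      cases M with
      | nil => simp at htrue
      | cons _ _ => simp
    · rw [if_neg (by omega)] at hfalse htrue
      obtain ⟨t, ht0, ht, hit⟩ := ih (fun q hq => hM q (mem_cons_of_mem _ hq))
        ⟨hfalse, by rwa [show i + 1 - (p.1 + p.2) = i - (p.1 + p.2) + 1 by omega] at htrue⟩
      exact ⟨t + 1, by omega, by simpa using ht, by rw [boundary_cons_succ]; omega⟩

lemma prefixHeight_ofRuns_nonneg_add {c : ℤ} (hc : 0 ≤ c)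
    (h : ∀ t ≤ M.length, 0 ≤ c + level M t) (i : ℕ) : 0 ≤ c + prefixHeight (ofRuns M) i := by
  induction M generalizing c i with
  | nil => simpa [prefixHeight] using hc
  | cons p M ih =>
    have hp : 0 ≤ c + (p.1 - p.2) := by simpa [level_cons_succ] using h 1 (by simp)
    rw [ofRuns_cons, prefixHeight_append, length_block]
    rcases lt_or_ge i (p.1 + p.2) with hi | hi
    · have := prefixHeight_block p i
      rw [Nat.sub_eq_zero_of_le hi.le, prefixHeight_zero]
      omega
    · rw [prefixHeight_of_length_le (by simpa using hi), netHeight_block, ← add_assoc]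
      refine ih hp (fun t ht => ?_) _
      simpa [level_cons_succ, add_assoc] using h (t + 1) (by simpa using ht)

theorem isNondecDyck_ofRuns (hM : ∀ p ∈ M, 0 < p.1 ∧ 0 < p.2)
    (hd : ∀ p ∈ M.dropLast, p.2 ≤ p.1) (hsum : (M.map Prod.fst).sum = (M.map Prod.snd).sum) :
    IsNondecDyck (ofRuns M) := by
  have hlevel : ∀ t ≤ M.length, 0 ≤ level M t := by
    intro t ht
    rcases ht.lt_or_eq with ht | rfl
    · simpa using level_mono hd (Nat.zero_le t) ht
    · rw [level_length, hsum, sub_self]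
  refine ⟨⟨fun i _ => ?_, ?_⟩, ?_⟩
  · simpa using prefixHeight_ofRuns_nonneg_add le_rfl (by simpa using hlevel) i
  · rw [prefixHeight_of_length_le le_rfl, netHeight, count_true_ofRuns, count_false_ofRuns, hsum,
      sub_self]
  · intro i j hi hj hij
    obtain ⟨t, -, ht, hit⟩ := exists_boundary_of_isValley hM hi
    obtain ⟨u, -, hu, hju⟩ := exists_boundary_of_isValley hM hj
    have htu : t ≤ u := by
      by_contra! h
      have := boundary_lt_boundary hM h ht.le
      omega
    rw [hit, hju, prefixHeight_boundary, prefixHeight_boundary]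
    exact level_mono hd htu hu

lemma snd_le_fst_of_mem_dropLast (hM : ∀ p ∈ M, 0 < p.1 ∧ 0 < p.2)
    (hw : IsNondecDyck (ofRuns M)) {p : ℕ × ℕ} (hp : p ∈ M.dropLast) : p.2 ≤ p.1 := by
  obtain ⟨s, hs, rfl⟩ := getElem_of_mem hp
  rw [length_dropLast] at hs
  rw [getElem_dropLast]
  suffices level M s ≤ level M (s + 1) by
    rw [level_succ (by omega)] at this
    omega
  rcases s with _ | s
  · rw [level_zero, ← prefixHeight_boundary]
    exact hw.1.1 _ (boundary_le_length M _)
  · have h0 := boundary_lt_boundary hM (by omega : 0 < s + 1) (by omega)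
    have h1 := boundary_lt_boundary hM (lt_add_one (s + 1)) (by omega)
    have := hw.2 _ _ (isValley_boundary (t := s) hM (by omega))
      (isValley_boundary (t := s + 1) hM (by omega)) (by omega)
    rwa [Nat.sub_add_cancel (by omega), Nat.sub_add_cancel (by omega), prefixHeight_boundary,
      prefixHeight_boundary] at this

lemma length_dropWhile_not_dropWhile_lt (hw : w ≠ []) :
    ((w.dropWhile id).dropWhile not).length < w.length := by
  obtain ⟨x, xs, rfl⟩ := exists_cons_of_ne_nil hw
  have h₁ := length_dropWhile_le id xs
  have h₂ := length_dropWhile_le not (xs.dropWhile id)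
  have h₃ := length_dropWhile_le not xs
  cases x <;>
    simp only [id_eq, Bool.not_false, Bool.false_eq_true, not_false_eq_true, dropWhile_cons_of_pos,
      dropWhile_cons_of_neg, length_cons] <;>
    omega

def toRuns (w : List Bool) : List (ℕ × ℕ) :=
  if hw : w = [] then [] else
    have := length_dropWhile_not_dropWhile_lt hw
    ((w.takeWhile id).length, ((w.dropWhile id).takeWhile not).length) ::
      toRuns ((w.dropWhile id).dropWhile not)
termination_by w.length

lemma ofRuns_toRuns (w : List Bool) : ofRuns (toRuns w) = w := by
  fun_induction toRuns w with
  | case1 => rfl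
  | case2 w _ _ ih =>
    have hU : replicate (w.takeWhile id).length true = w.takeWhile id :=
      (eq_replicate_iff.mpr ⟨rfl, fun _ hb => mem_takeWhile_imp hb⟩).symm
    have hD : replicate ((w.dropWhile id).takeWhile not).length false =
        (w.dropWhile id).takeWhile not :=
      (eq_replicate_iff.mpr ⟨rfl, fun _ hb => by simpa using mem_takeWhile_imp hb⟩).symm
    rw [ofRuns_cons, ih, block, hU, hD, append_assoc, takeWhile_append_dropWhile,
      takeWhile_append_dropWhile]

lemma takeWhile_not_ofRuns (hM : ∀ p ∈ M, 0 < p.1 ∧ 0 < p.2) :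
    (ofRuns M).takeWhile not = [] := by
  obtain _ | ⟨p, M⟩ := M
  · rfl
  · obtain ⟨a, ha⟩ := Nat.exists_eq_add_one.mpr (hM p mem_cons_self).1
    simp [block, ha, replicate_succ]

lemma dropWhile_not_ofRuns (hM : ∀ p ∈ M, 0 < p.1 ∧ 0 < p.2) :
    (ofRuns M).dropWhile not = ofRuns M := by
  obtain _ | ⟨p, M⟩ := M
  · rfl
  · obtain ⟨a, ha⟩ := Nat.exists_eq_add_one.mpr (hM p mem_cons_self).1
    simp [block, ha, replicate_succ]

lemma toRuns_ofRuns (hM : ∀ p ∈ M, 0 < p.1 ∧ 0 < p.2) : toRuns (ofRuns M) = M := by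
  induction M with
  | nil => simp [toRuns]
  | cons p M ih =>
    rcases p with ⟨a, b⟩
    obtain ⟨ha, hb⟩ := hM (a, b) mem_cons_self
    obtain ⟨a, rfl⟩ := Nat.exists_eq_add_one.mpr ha
    obtain ⟨b, rfl⟩ := Nat.exists_eq_add_one.mpr hb
    have hM' : ∀ p ∈ M, 0 < p.1 ∧ 0 < p.2 := fun p hp => hM p (mem_cons_of_mem _ hp)
    rw [toRuns, dif_neg (by simp [block])]
    simp [block, replicate_succ, takeWhile_append_of_pos, dropWhile_append_of_pos,
      takeWhile_not_ofRuns hM', dropWhile_not_ofRuns hM', ih hM']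

lemma toRuns_pos (w : List Bool) (hhead : ∀ b ∈ w.head?, b = true)
    (hlast : ∀ b ∈ w.getLast?, b = false) : ∀ p ∈ toRuns w, 0 < p.1 ∧ 0 < p.2 := by
  fun_induction toRuns w with
  | case1 => simp
  | case2 w hw _ ih =>
    obtain ⟨x, xs, rfl⟩ := exists_cons_of_ne_nil hw
    obtain rfl : x = true := hhead x rfl
    have hD : (true :: xs).dropWhile id ≠ [] := by
      intro h
      have hmem := dropWhile_eq_nil_iff.mp h _ (getLast_mem (cons_ne_nil true xs))
      simp [hlast _ (getLast?_eq_some_getLast (cons_ne_nil true xs))] at hmem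
    obtain ⟨y, ys, hy⟩ := exists_cons_of_ne_nil hD
    obtain rfl : y = false := by simpa [hy] using head?_dropWhile_not id (true :: xs)
    intro p hp
    rcases mem_cons.mp hp with rfl | hp
    · simp [hy]
    · refine ih (fun b hb => ?_) (fun b hb => ?_) p hp
      · have := head?_dropWhile_not not ((true :: xs).dropWhile id)
        rw [Option.mem_def.mp hb] at this
        simpa using this
      · exact hlast b (((dropWhile_suffix _).trans (dropWhile_suffix _)).getLast?_eq_some hb)

lemma IsDyckWord.head_eq_true (hw : IsDyckWord w) : ∀ b ∈ w.head?, b = true := by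
  intro b hb
  obtain ⟨xs, rfl⟩ : ∃ xs, w = b :: xs := by cases w <;> simp_all
  have := hw.1 1 (by simp)
  cases b <;> simp_all [prefixHeight]

lemma IsDyckWord.getLast_eq_false (hw : IsDyckWord w) : ∀ b ∈ w.getLast?, b = false := by
  intro b hb
  obtain ⟨ys, rfl⟩ := getLast?_eq_some_iff.mp hb
  have hys := hw.1 ys.length (by simp)
  have htot := hw.2
  rw [prefixHeight_of_length_le le_rfl, netHeight_append] at htot
  rw [prefixHeight_append, prefixHeight_of_length_le le_rfl, Nat.sub_self, prefixHeight_zero,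
    add_zero] at hys
  cases b
  · rfl
  · have : netHeight [true] = 1 := rfl
    omega

lemma IsDyckWord.count_true_eq_count_false (hw : IsDyckWord w) :
    w.count true = w.count false := by
  have := hw.2
  rw [prefixHeight_of_length_le le_rfl, netHeight] at this
  omega

def nondecRuns (n : ℕ) : Set (List (ℕ × ℕ)) :=
  {M | (∀ p ∈ M, 0 < p.1 ∧ 0 < p.2) ∧ (∀ p ∈ M.dropLast, p.2 ≤ p.1) ∧
    (M.map Prod.fst).sum = n ∧ (M.map Prod.snd).sum = n}

theorem nondecDyck_eq_image_ofRuns (n : ℕ) : nondecDyck n = ofRuns '' nondecRuns n := by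
  ext w
  constructor
  · rintro ⟨hlen, hw⟩
    have hM := toRuns_pos w (IsDyckWord.head_eq_true hw.1) (IsDyckWord.getLast_eq_false hw.1)
    have hwM : ofRuns (toRuns w) = w := ofRuns_toRuns w
    have hcount := count_true_add_count_false w
    have hbalance := IsDyckWord.count_true_eq_count_false hw.1
    refine ⟨toRuns w, ⟨hM, fun p hp => snd_le_fst_of_mem_dropLast hM (by rwa [hwM]) hp, ?_, ?_⟩,
      hwM⟩
    · rw [← count_true_ofRuns, hwM]
      omega
    · rw [← count_false_ofRuns, hwM]
      omega
  · rintro ⟨M, ⟨hM, hd, hfst, hsnd⟩, rfl⟩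
    refine ⟨?_, isNondecDyck_ofRuns hM hd (hfst.trans hsnd.symm)⟩
    rw [length_ofRuns, hfst, hsnd, two_mul]

theorem numNondecDyck_eq_ncard (n : ℕ) : numNondecDyck n = (nondecRuns n).ncard := by
  rw [numNondecDyck, nondecDyck_eq_image_ofRuns]
  refine Set.InjOn.ncard_image fun M hM N hN h => ?_
  rw [← toRuns_ofRuns hM.1, ← toRuns_ofRuns hN.1, h]

lemma eq_nil_of_sum_fst_eq_zero (hM : ∀ p ∈ M, 0 < p.1) (h : (M.map Prod.fst).sum = 0) :
    M = [] := by
  rw [List.sum_eq_zero_iff] at h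
  rcases M with _ | ⟨p, M⟩
  · rfl
  · exact absurd (h p.1 (mem_map_of_mem mem_cons_self)) (hM p mem_cons_self).ne'

lemma nondecRuns_zero : nondecRuns 0 = {[]} := by
  ext M
  refine ⟨fun hM => eq_nil_of_sum_fst_eq_zero (fun p hp => (hM.1 p hp).1) hM.2.2.1, ?_⟩
  rintro rfl
  simp [nondecRuns]

def tallRuns (m : ℕ) : Set (List (ℕ × ℕ)) :=
  {L | (∀ p ∈ L, 0 < p.2 ∧ p.2 ≤ p.1) ∧ (L.map Prod.fst).sum = m}

lemma pos_of_mem_tallRuns {L : List (ℕ × ℕ)} {m : ℕ} (hL : L ∈ tallRuns m) :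
    ∀ p ∈ L, 0 < p.1 ∧ 0 < p.2 :=
  fun p hp => ⟨(hL.1 p hp).1.trans_le (hL.1 p hp).2, (hL.1 p hp).1⟩

lemma sum_snd_le_of_mem_tallRuns {L : List (ℕ × ℕ)} {m : ℕ} (hL : L ∈ tallRuns m) :
    (L.map Prod.snd).sum ≤ m :=
  hL.2 ▸ List.sum_le_sum fun p hp => (hL.1 p hp).2

lemma tallRuns_finite (m : ℕ) : (tallRuns m).Finite := by
  refine Set.Finite.of_finite_image (f := ofRuns) ((finite_length_le Bool (2 * m)).subset ?_) ?_
  · rintro _ ⟨L, hL, rfl⟩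
    have := sum_snd_le_of_mem_tallRuns hL
    simp only [Set.mem_ofPred_eq, length_ofRuns, hL.2]
    omega
  · intro L hL L' hL' h
    rw [← toRuns_ofRuns (pos_of_mem_tallRuns hL), ← toRuns_ofRuns (pos_of_mem_tallRuns hL'), h]

lemma tallRuns_zero : tallRuns 0 = {[]} := by
  ext L
  refine ⟨fun hL => eq_nil_of_sum_fst_eq_zero (fun p hp => (pos_of_mem_tallRuns hL p hp).1) hL.2,
    ?_⟩
  rintro rfl
  simp [tallRuns]

lemma tallRuns_one : tallRuns 1 = {[(1, 1)]} := by
  ext L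
  refine ⟨fun hL => ?_, ?_⟩
  · obtain _ | ⟨⟨a, b⟩, L⟩ := L
    · simp [tallRuns] at hL
    · have hab := hL.1 (a, b) mem_cons_self
      have hsum := hL.2
      simp only [map_cons, sum_cons] at hsum
      have hL' : L = [] := eq_nil_of_sum_fst_eq_zero
        (fun p hp => (pos_of_mem_tallRuns hL p (mem_cons_of_mem _ hp)).1) (by omega)
      subst hL'
      simp only [Set.mem_singleton_iff, cons.injEq, Prod.mk.injEq, and_true]
      omega
  · rintro rfl
    simp [tallRuns]

lemma nondecRuns_succ (n : ℕ) :
    nondecRuns (n + 1) = ⋃ j ∈ Finset.range (n + 1),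
      (fun L => L ++ [(n + 1 - j, n + 1 - (L.map Prod.snd).sum)]) '' tallRuns j := by
  ext M
  simp only [Set.mem_iUnion, Set.mem_image, Finset.mem_range, exists_prop]
  constructor
  · rintro ⟨hM, hd, hfst, hsnd⟩
    obtain ⟨L, q, rfl⟩ := (eq_nil_or_concat' M).resolve_left (by rintro rfl; simp at hfst)
    have hq := hM q (by simp)
    simp only [dropLast_concat] at hd
    simp only [map_append, sum_append, map_singleton, sum_singleton] at hfst hsnd
    refine ⟨(L.map Prod.fst).sum, by omega, L,
      ⟨fun p hp => ⟨(hM p (by simp [hp])).2, hd p hp⟩, rfl⟩, ?_⟩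
    simp only [append_cancel_left_eq, cons.injEq, and_true, Prod.ext_iff]
    omega
  · rintro ⟨j, hj, L, hL, rfl⟩
    have hs := sum_snd_le_of_mem_tallRuns hL
    refine ⟨fun p hp => ?_, by simpa using fun p hp => (hL.1 p hp).2, ?_, ?_⟩
    · rcases mem_append.mp hp with hp | hp
      · exact pos_of_mem_tallRuns hL p hp
      · simp only [List.mem_singleton] at hp
        subst hp
        omega
    all_goals
      simp only [map_append, sum_append, map_singleton, sum_singleton, hL.2]
      omega

lemma tallRuns_add_two (m : ℕ) :
    tallRuns (m + 2) = (modifyHead fun p => (p.1 + 1, p.2)) '' tallRuns (m + 1) ∪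
      ⋃ j ∈ Finset.range (m + 2), (fun L => (m + 2 - j, m + 2 - j) :: L) '' tallRuns j := by
  ext L
  simp only [Set.mem_union, Set.mem_iUnion, Set.mem_image, Finset.mem_range, exists_prop]
  constructor
  · rintro ⟨hL, hsum⟩
    obtain _ | ⟨⟨a, b⟩, L⟩ := L
    · simp at hsum
    obtain ⟨hb, hba⟩ : 0 < b ∧ b ≤ a := hL (a, b) mem_cons_self
    have hL' : ∀ p ∈ L, 0 < p.2 ∧ p.2 ≤ p.1 := fun p hp => hL p (mem_cons_of_mem _ hp)
    simp only [map_cons, sum_cons] at hsum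
    rcases hba.lt_or_eq with hlt | rfl
    · refine .inl ⟨(a - 1, b) :: L, ⟨forall_mem_cons.mpr ⟨⟨hb, by omega⟩, hL'⟩, ?_⟩, ?_⟩
      · simp only [map_cons, sum_cons]
        omega
      · simp only [modifyHead_cons, cons.injEq, Prod.mk.injEq, and_true]
        omega
    · refine .inr ⟨m + 2 - b, by omega, L, ⟨hL', by omega⟩, ?_⟩
      simp only [cons.injEq, Prod.mk.injEq, and_true]
      omega
  · rintro (⟨_ | ⟨⟨a, b⟩, L⟩, ⟨hL, hsum⟩, rfl⟩ | ⟨j, hj, L, ⟨hL, hsum⟩, rfl⟩)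
    · simp at hsum
    · obtain ⟨hb, hba⟩ : 0 < b ∧ b ≤ a := hL (a, b) mem_cons_self
      simp only [map_cons, sum_cons] at hsum
      rw [modifyHead_cons]
      refine ⟨forall_mem_cons.mpr ⟨⟨hb, by dsimp only; omega⟩,
        fun p hp => hL p (mem_cons_of_mem _ hp)⟩, ?_⟩
      simp only [map_cons, sum_cons]
      omega
    · refine ⟨forall_mem_cons.mpr ⟨⟨by omega, le_rfl⟩, hL⟩, ?_⟩
      simp only [map_cons, sum_cons, hsum]
      omega

lemma numNondecDyck_succ (n : ℕ) :
    numNondecDyck (n + 1) = ∑ j ∈ Finset.range (n + 1), (tallRuns j).ncard := by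
  rw [numNondecDyck_eq_ncard, nondecRuns_succ,
    Set.ncard_biUnion_finset_image _ _ _ (fun j _ => tallRuns_finite j)]
  · intro j _ L _ L' _ h
    simpa using congrArg dropLast h
  · intro i hi j hj hij
    rw [Function.onFun, Set.disjoint_left]
    rintro _ ⟨L, -, rfl⟩ ⟨L', -, h⟩
    have := congrArg getLast? h
    simp only [getLast?_concat, Option.some.injEq, Prod.mk.injEq] at this
    simp only [Finset.coe_range, Set.mem_Iio] at hi hj
    omega

lemma ncard_tallRuns_add_two (m : ℕ) :
    (tallRuns (m + 2)).ncard =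
      (tallRuns (m + 1)).ncard + ∑ j ∈ Finset.range (m + 2), (tallRuns j).ncard := by
  have hinj : Set.InjOn (modifyHead fun p : ℕ × ℕ => (p.1 + 1, p.2)) (tallRuns (m + 1)) := by
    rintro (_ | ⟨p, L⟩) ⟨-, hL⟩ (_ | ⟨p', L'⟩) ⟨-, hL'⟩ h
    all_goals simp_all [Prod.ext_iff]
  have hdiag : ∀ j ∈ Finset.range (m + 2),
      Set.InjOn (fun L => (m + 2 - j, m + 2 - j) :: L) (tallRuns j) :=
    fun j _ L _ L' _ h => (cons.inj h).2
  have hfin : (⋃ j ∈ Finset.range (m + 2),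
      (fun L => (m + 2 - j, m + 2 - j) :: L) '' tallRuns j).Finite :=
    Set.Finite.biUnion' (Finset.finite_toSet _) fun j _ => (tallRuns_finite j).image _
  rw [tallRuns_add_two, Set.ncard_union_eq ?_ ((tallRuns_finite _).image _) hfin,
    hinj.ncard_image, Set.ncard_biUnion_finset_image _ _ _ (fun j _ => tallRuns_finite j) hdiag]
  · intro i hi j hj hij
    rw [Function.onFun, Set.disjoint_left]
    rintro _ ⟨L, -, rfl⟩ ⟨L', -, h⟩
    simp only [Finset.coe_range, Set.mem_Iio] at hi hj
    have := (cons.inj h).1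
    simp only [Prod.mk.injEq] at this
    omega
  · rw [Set.disjoint_left]
    rintro _ ⟨_ | ⟨p, L⟩, ⟨hL, hsum⟩, rfl⟩ hdiag
    · simp at hsum
    · simp only [Set.mem_iUnion, Set.mem_image] at hdiag
      obtain ⟨j, -, L', -, h⟩ := hdiag
      have := hL p mem_cons_self
      simp only [modifyHead_cons, cons.injEq, Prod.mk.injEq] at h
      omega

lemma numNondecDyck_zero : numNondecDyck 0 = 1 := by
  rw [numNondecDyck_eq_ncard, nondecRuns_zero, Set.ncard_singleton]

lemma numNondecDyck_one : numNondecDyck 1 = 1 := by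
  rw [numNondecDyck_succ, Finset.sum_range_one, tallRuns_zero, Set.ncard_singleton]

lemma numNondecDyck_add_two (n : ℕ) :
    numNondecDyck (n + 2) + numNondecDyck n = 3 * numNondecDyck (n + 1) := by
  rcases n with _ | k
  · have h₀ : (tallRuns 0).ncard = 1 := by rw [tallRuns_zero, Set.ncard_singleton]
    have h₁ : (tallRuns 1).ncard = 1 := by rw [tallRuns_one, Set.ncard_singleton]
    simp [numNondecDyck_zero, numNondecDyck_succ, Finset.sum_range_succ, h₀, h₁]
  · have := ncard_tallRuns_add_two k
    rw [numNondecDyck_succ (k + 2), numNondecDyck_succ (k + 1), numNondecDyck_succ k,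
      Finset.sum_range_succ _ (k + 2), Finset.sum_range_succ _ (k + 1)]
    rw [Finset.sum_range_succ _ (k + 1)] at this
    omega

end NondecDyck

open PowerSeries in
lemma PowerSeries.one_sub_three_X_add_X_sq_mul_mk {R : Type*} [CommRing R] (a : ℕ → R)
    (h : ∀ n, a (n + 2) + a n = 3 * a (n + 1)) :
    (1 - 3 * X + X ^ 2) * mk a = C (a 0) + C (a 1 - 3 * a 0) * X := by
  have hsplit : (1 - 3 * X + X ^ 2 : R⟦X⟧) * mk a = mk a - C 3 * (X * mk a) + X ^ 2 * mk a := by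
    rw [map_ofNat]
    ring
  ext n
  rw [hsplit]
  rcases n with _ | _ | n
  · simp
  · simp [coeff_succ_X_mul, coeff_X_pow_mul']
  · have hl : coeff (n + 2) (mk a - C 3 * (X * mk a) + X ^ 2 * mk a) =
        a (n + 2) - 3 * a (n + 1) + a n := by
      simp [coeff_succ_X_mul, coeff_X_pow_mul']
    have hr : coeff (n + 2) (C (a 0) + C (a 1 - 3 * a 0) * X) = 0 := by simp
    rw [hl, hr]
    linear_combination h n

/-- In `ℤ⟦X⟧`, the generating function `D(X) = Σ d(n) Xⁿ` of nondecreasing Dyck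
words satisfies `(1 − 3X + X²)·D(X) = 1 − 2X`. -/
theorem nondecDyck_gf :
    ((1 : PowerSeries ℤ) - 3 * PowerSeries.X + PowerSeries.X ^ 2) *
        PowerSeries.mk (fun n => (numNondecDyck n : ℤ)) =
      1 - 2 * PowerSeries.X := by
  have hrec (n : ℕ) : (numNondecDyck (n + 2) : ℤ) + numNondecDyck n =
      3 * numNondecDyck (n + 1) := mod_cast NondecDyck.numNondecDyck_add_two n
  rw [PowerSeries.one_sub_three_X_add_X_sq_mul_mk _ hrec, NondecDyck.numNondecDyck_zero,
    NondecDyck.numNondecDyck_one]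
  norm_num [map_ofNat, sub_eq_add_neg]
end

section
/- Let c(n) be the coefficient of X^n in the formal power series X³(1 − X)/(1 − 3X + X²)² over ℝ, and let α = (1 + √5)/2. Then c(n)/(n·α^{2n}) converges, as n → ∞, to (√5 − 2)/5. (The series X³(1 − X)/(1 − 3X + X²)² is the generating function, by size, of the total number of paths over all Elena trees; hence the average number of paths in a random Elena tree with n nodes is asymptotic to n/√5.) -/
/-!
Since `1 - 3X + X² = (1 - aX)(1 - bX)` with `a = α²` and `b = α⁻²`, partial fractions write
`X³(1 - X)/(1 - 3X + X²)²` as `A/(1 - aX)² + B/(1 - aX) + C/(1 - bX)² + D/(1 - bX) - 1`, so for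
`n ≥ 1` its coefficients are `(A(n + 1) + B)aⁿ + (C(n + 1) + D)bⁿ` with `A = (√5 - 2)/5`.
As `|b| < a`, the term `A n aⁿ` dominates.
-/

open PowerSeries Filter Topology

/-- `(1 - ax)²(1 - bx)²` times `A/(1 - ax)² + B/(1 - ax) + C/(1 - bx)² + D/(1 - bx) - 1`. -/
def partialFractionNumerator {R : Type*} [CommRing R] (a b A B C D x : R) : R :=
  A * (1 - b * x) ^ 2 + B * (1 - a * x) * (1 - b * x) ^ 2 + C * (1 - a * x) ^ 2
    + D * (1 - a * x) ^ 2 * (1 - b * x) - (1 - a * x) ^ 2 * (1 - b * x) ^ 2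

namespace PowerSeries

variable {R : Type*} [CommRing R]

theorem mk_pow_mul_one_sub_C_mul_X (r : R) : mk (r ^ ·) * (1 - C r * X) = 1 := by
  simpa [rescale_mk, rescale_X] using congrArg (rescale r) (mk_one_mul_one_sub_eq_one R)

theorem mk_pow_sq (r : R) : mk (r ^ ·) ^ 2 = mk fun n => (n + 1) * r ^ n := by
  have := congrArg (rescale r) (mk_one_pow_eq_mk_choose_add R 1)
  simp only [map_pow, rescale_mk, Pi.one_apply, mul_one, Nat.choose_one_right] at this
  rw [this]
  ext n
  simp [add_comm, mul_comm]

theorem partialFractionNumerator_mul_sq_mk_pow_mul_mk_pow (a b A B C' D : R) :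
    partialFractionNumerator (C a) (C b) (C A) (C B) (C C') (C D) X
        * (mk (a ^ ·) * mk (b ^ ·)) ^ 2
      = mk (fun n => (A * (n + 1) + B) * a ^ n + (C' * (n + 1) + D) * b ^ n) - 1 := by
  have hmk : mk (fun n => (A * (n + 1) + B) * a ^ n + (C' * (n + 1) + D) * b ^ n)
      = C A * mk (a ^ ·) ^ 2 + C B * mk (a ^ ·) + C C' * mk (b ^ ·) ^ 2 + C D * mk (b ^ ·) := by
    ext n
    simp only [coeff_mk, mk_pow_sq, map_add, coeff_C_mul]
    ring
  rw [hmk, partialFractionNumerator]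
  set ga := mk (a ^ ·)
  set gb := mk (b ^ ·)
  set u := 1 - C a * X
  set v := 1 - C b * X
  linear_combination
    (C B * ga * (gb * v) ^ 2 + C C' * gb ^ 2 * (ga * u + 1)
        + C D * gb * (ga * u + 1) * (gb * v) - (ga * u + 1) * (gb * v) ^ 2)
        * mk_pow_mul_one_sub_C_mul_X a
      + (C A * ga ^ 2 * (gb * v + 1) + C B * ga * (gb * v + 1) + C D * gb - (gb * v + 1))
        * mk_pow_mul_one_sub_C_mul_X b

variable {k : Type*} [Field k]

theorem inv_one_sub_three_mul_X_add_X_sq {a b : k} (hadd : a + b = 3) (hmul : a * b = 1) :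
    (1 - 3 * X + X ^ 2 : k⟦X⟧)⁻¹ = mk (a ^ ·) * mk (b ^ ·) := by
  have hfactor : (1 - 3 * X + X ^ 2 : k⟦X⟧) = (1 - C a * X) * (1 - C b * X) := by
    have h3 : (3 : k⟦X⟧) = C a + C b := by rw [← map_add, hadd, map_ofNat]
    have h1 : (1 : k⟦X⟧) = C a * C b := by rw [← map_mul, hmul, map_one]
    linear_combination X ^ 2 * h1 - X * h3
  symm
  rw [eq_inv_iff_mul_eq_one (by simp), hfactor]
  linear_combination (mk (b ^ ·) * (1 - C b * X)) * mk_pow_mul_one_sub_C_mul_X a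
    + mk_pow_mul_one_sub_C_mul_X b

theorem X_pow_three_mul_one_sub_X_eq_partialFractionNumerator [Infinite k] {a b A B C' D : k}
    (h : ∀ x, x ^ 3 * (1 - x) = partialFractionNumerator a b A B C' D x) :
    X ^ 3 * (1 - X) = partialFractionNumerator (C a) (C b) (C A) (C B) (C C') (C D) X := by
  have hpoly : Polynomial.X ^ 3 * (1 - Polynomial.X) = partialFractionNumerator
      (Polynomial.C a) (Polynomial.C b) (Polynomial.C A) (Polynomial.C B) (Polynomial.C C')
      (Polynomial.C D) Polynomial.X :=
    Polynomial.funext fun x => by simpa [partialFractionNumerator] using h x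
  simpa [partialFractionNumerator] using
    congrArg (Polynomial.coeToPowerSeries.ringHom (R := k)) hpoly

theorem coeff_X_pow_three_mul_one_sub_X_mul_inv_sq [Infinite k] {a b A B C' D : k}
    (hadd : a + b = 3) (hmul : a * b = 1)
    (h : ∀ x, x ^ 3 * (1 - x) = partialFractionNumerator a b A B C' D x) {n : ℕ} (hn : n ≠ 0) :
    coeff n (X ^ 3 * (1 - X) * ((1 - 3 * X + X ^ 2 : k⟦X⟧)⁻¹) ^ 2)
      = (A * (n + 1) + B) * a ^ n + (C' * (n + 1) + D) * b ^ n := by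
  rw [inv_one_sub_three_mul_X_add_X_sq hadd hmul,
    X_pow_three_mul_one_sub_X_eq_partialFractionNumerator h,
    partialFractionNumerator_mul_sq_mk_pow_mul_mk_pow]
  simp [hn]

end PowerSeries

theorem tendsto_div_mul_pow_of_eventuallyEq {c : ℕ → ℝ} {a b A B C D : ℝ} (ha : 0 < a)
    (hab : |b| < a)
    (hc : ∀ᶠ n in atTop, c n = (A * (n + 1) + B) * a ^ n + (C * (n + 1) + D) * b ^ n) :
    Tendsto (fun n => c n / (n * a ^ n)) atTop (𝓝 A) := by
  have hr : |b / a| < 1 := by rwa [abs_div, abs_of_pos ha, div_lt_one ha]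
  have hinv := tendsto_one_div_atTop_nhds_zero_nat (𝕜 := ℝ)
  have hlim := (tendsto_const_nhds (x := A)).add (hinv.const_mul (A + B)) |>.add
    ((tendsto_const_nhds (x := C)).add (hinv.const_mul (C + D)) |>.mul
      (tendsto_pow_atTop_nhds_zero_of_abs_lt_one hr))
  simp only [mul_zero, add_zero] at hlim
  refine hlim.congr' ?_
  filter_upwards [hc, eventually_ne_atTop 0] with n hcn hn
  rw [hcn, div_pow]
  field_simp
  ring

/-- Let `c(n)` be the coefficient of `Xⁿ` in `X³(1 − X)/(1 − 3X + X²)²` over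
`ℝ` and `α = (1 + √5)/2`.  Then `c(n)/(n·α^(2n)) → (√5 − 2)/5`. -/
theorem avg_num_paths :
    Filter.Tendsto
      (fun n : ℕ =>
        PowerSeries.coeff n
            (PowerSeries.X ^ 3 * (1 - PowerSeries.X) *
              (((1 : PowerSeries ℝ) - 3 * PowerSeries.X + PowerSeries.X ^ 2)⁻¹) ^ 2) /
          ((n : ℝ) * ((1 + Real.sqrt 5) / 2) ^ (2 * n)))
      Filter.atTop (nhds ((Real.sqrt 5 - 2) / 5)) := by
  have hs : √5 ^ 2 = 5 := Real.sq_sqrt (by norm_num)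
  have hnum (x : ℝ) : x ^ 3 * (1 - x) = partialFractionNumerator ((3 + √5) / 2) ((3 - √5) / 2)
      ((√5 - 2) / 5) (9 / 10 - 23 * √5 / 50) ((-2 - √5) / 5) (9 / 10 + 23 * √5 / 50) x := by
    rw [partialFractionNumerator]
    -- the coefficient is the quotient of the difference of both sides by `√5 ^ 2 - 5`
    linear_combination (3 / 50 * x - 63 / 100 * x ^ 2 + (257 / 200 - 23 / 200 * √5 ^ 2) * x ^ 3
      + (-13 / 16 + 1 / 16 * √5 ^ 2) * x ^ 4) * hs
  have hpow (n : ℕ) : ((1 + √5) / 2) ^ (2 * n) = ((3 + √5) / 2) ^ n := by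
    rw [pow_mul]
    congr 1
    linear_combination hs / 4
  have hconj : |(3 - √5) / 2| < (3 + √5) / 2 := by
    rw [abs_lt]
    constructor <;> linarith [Real.sqrt_pos.2 (by norm_num : (0 : ℝ) < 5)]
  simp_rw [hpow]
  exact tendsto_div_mul_pow_of_eventuallyEq (by positivity) hconj <|
    (eventually_ne_atTop 0).mono fun n hn => coeff_X_pow_three_mul_one_sub_X_mul_inv_sq (by ring)
      (by linear_combination -hs / 4) hnum hn
end
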